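/- Let c ∈ ℂ^{ℤ_d×ℤ_d}. Then Tc = vv* for some v ∈ ℂ^d with v_0 ≠ 0 if and only if p_0(1) is real and positive and p_{j−k}(ω^k) = p_j(1)·conj(p_k(1)) / p_0(1) for all j,k ∈ ℤ_d (subscripts mod d). -/

import Mathlib

/-!
For each `j`, the `(m, n)` entry of `(S^j Ω^k)*` vanishes unless `j = n - m`, which gives
`(Tc)_{mn} = p_{m-n}(ω^n) / d`. So the symbols are the entries of `A = Tc` up to the positive
factor `d`, and the claim becomes the description of the matrices `A = v v*` with `v₀ ≠ 0`:
`A₀₀ = |v₀|² > 0`, and conversely `v = A_{·0} / √A₀₀` recovers `v` from column `0`.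
-/

open Matrix Complex

/-- `ω = exp(2πi/d)`, a primitive `d`-th root of unity. -/
noncomputable def omegaRoot (d : ℕ) : ℂ := Complex.exp (2 * Real.pi * Complex.I / d)

/-- The cyclic shift matrix `S`, `S_{jk} = δ_{j,k+1}`. -/
def Smat (d : ℕ) [NeZero d] : Matrix (ZMod d) (ZMod d) ℂ :=
  Matrix.of fun j k => if j = k + 1 then 1 else 0

/-- The modulation matrix `Ω`, `Ω_{jk} = ω^j δ_{jk}`. -/
noncomputable def Omat (d : ℕ) [NeZero d] : Matrix (ZMod d) (ZMod d) ℂ :=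
  Matrix.of fun j k => if j = k then omegaRoot d ^ j.val else 0

/-- The reconstruction operator `T`, `Tc = (1/d) Σ_{j,k} c_{jk} (S^j Ω^k)^*`. -/
noncomputable def Trec (d : ℕ) [NeZero d] (c : Matrix (ZMod d) (ZMod d) ℂ) :
    Matrix (ZMod d) (ZMod d) ℂ :=
  (1 / (d : ℂ)) • ∑ j : ZMod d, ∑ k : ZMod d, c j k • (Smat d ^ j.val * Omat d ^ k.val)ᴴ

/-- The `j`-th symbol of `c`: `p_j(z) = Σ_r c_{-j,r} (ω^j z)^{-r}`. -/
noncomputable def symb (d : ℕ) [NeZero d] (c : Matrix (ZMod d) (ZMod d) ℂ)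
    (j : ZMod d) (z : ℂ) : ℂ :=
  ∑ r : ZMod d, c (-j) r * (omegaRoot d ^ j.val * z) ^ (-(r.val : ℤ))

theorem exists_eq_vecMulVec_star_iff {𝕜 ι : Type*} [RCLike 𝕜] (A : Matrix ι ι 𝕜)
    (i₀ : ι) :
    (∃ v : ι → 𝕜, A = vecMulVec v (star v) ∧ v i₀ ≠ 0) ↔
      RCLike.im (A i₀ i₀) = 0 ∧ 0 < RCLike.re (A i₀ i₀) ∧
        ∀ i j, A i j = A i i₀ * starRingEnd 𝕜 (A j i₀) / A i₀ i₀ := by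
  constructor
  · rintro ⟨v, rfl, hv⟩
    have hdiag : vecMulVec v (star v) i₀ i₀ = ((‖v i₀‖ ^ 2 : ℝ) : 𝕜) := by
      rw [vecMulVec_apply, Pi.star_apply, RCLike.star_def, RCLike.mul_conj, RCLike.ofReal_pow]
    have hconj : starRingEnd 𝕜 (v i₀) ≠ 0 := by simpa using hv
    refine ⟨by rw [hdiag, RCLike.ofReal_im], by rw [hdiag, RCLike.ofReal_re]; positivity, ?_⟩
    intro i j
    simp only [vecMulVec_apply, Pi.star_apply, RCLike.star_def, map_mul, RCLike.conj_conj]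
    field_simp
  · rintro ⟨him, hre, hA⟩
    set a := A i₀ i₀
    have ha : ((RCLike.re a : ℝ) : 𝕜) = a := by
      rw [← RCLike.conj_eq_iff_re, RCLike.conj_eq_iff_im, him]
    set s := Real.sqrt (RCLike.re a)
    have hs : (s : 𝕜) * s = a := by
      rw [← RCLike.ofReal_mul, Real.mul_self_sqrt hre.le, ha]
    have hs0 : (s : 𝕜) ≠ 0 := by
      exact_mod_cast (Real.sqrt_pos.mpr hre).ne'
    have ha0 : a ≠ 0 := by rw [← hs]; exact mul_ne_zero hs0 hs0
    refine ⟨fun i => A i i₀ / s, ?_, div_ne_zero ha0 hs0⟩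
    ext i j
    rw [hA i j, vecMulVec_apply, Pi.star_apply, RCLike.star_def, map_div₀, RCLike.conj_ofReal,
      div_mul_div_comm, hs]

section ShiftModulation

variable (d : ℕ) [NeZero d]

lemma isPrimitiveRoot_omegaRoot : IsPrimitiveRoot (omegaRoot d) d :=
  Complex.isPrimitiveRoot_exp d (NeZero.ne d)

lemma omegaRoot_pow_val_add (a b : ZMod d) :
    omegaRoot d ^ (a + b).val = omegaRoot d ^ a.val * omegaRoot d ^ b.val := by
  rw [ZMod.val_add, ← pow_add]
  simpa [← (isPrimitiveRoot_omegaRoot d).eq_orderOf] using pow_mod_orderOf (omegaRoot d) _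

lemma star_omegaRoot_pow (n : ℕ) : star (omegaRoot d ^ n) = (omegaRoot d ^ n)⁻¹ := by
  rw [Complex.inv_eq_conj]
  · rfl
  · rw [norm_pow, (isPrimitiveRoot_omegaRoot d).norm'_eq_one (NeZero.ne d), one_pow]

lemma Smat_pow_apply (p : ℕ) (m n : ZMod d) :
    (Smat d ^ p) m n = if m = n + p then 1 else 0 := by
  induction p generalizing m with
  | zero => simp [one_apply]
  | succ p ih =>
    rw [pow_succ', mul_apply]
    simp only [ih, mul_ite, mul_one, mul_zero, Finset.sum_ite_eq', Finset.mem_univ, if_true]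
    rw [Smat, of_apply, Nat.cast_succ, add_assoc]

lemma Omat_eq_diagonal : Omat d = diagonal fun j : ZMod d => omegaRoot d ^ j.val := by
  ext j k
  by_cases h : j = k <;> simp [Omat, diagonal, h]

lemma Smat_pow_mul_Omat_pow_apply (p q : ℕ) (m n : ZMod d) :
    (Smat d ^ p * Omat d ^ q) m n = if m = n + p then (omegaRoot d ^ n.val) ^ q else 0 := by
  rw [Omat_eq_diagonal, diagonal_pow, mul_diagonal, Pi.pow_apply, Smat_pow_apply, ite_mul,
    one_mul, zero_mul]

variable (c : Matrix (ZMod d) (ZMod d) ℂ)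

lemma Trec_apply (m n : ZMod d) :
    Trec d c m n = (1 / d : ℂ) * ∑ r, c (n - m) r * (omegaRoot d ^ (m.val * r.val))⁻¹ := by
  simp only [Trec, Matrix.smul_apply, Matrix.sum_apply, conjTranspose_apply,
    Smat_pow_mul_Omat_pow_apply, ZMod.natCast_val, ZMod.cast_id', id, smul_eq_mul]
  have hcond : ∀ j : ZMod d, n = m + j ↔ n - m = j := fun j => sub_eq_iff_eq_add'.symm
  simp only [hcond, apply_ite star, star_zero, mul_ite, mul_zero, ← pow_mul, star_omegaRoot_pow]
  rw [Finset.sum_comm]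
  simp only [Finset.sum_ite_eq, Finset.mem_univ, if_true]

lemma symb_sub_eq_mul_Trec (m n : ZMod d) :
    symb d c (m - n) (omegaRoot d ^ n.val) = d * Trec d c m n := by
  rw [Trec_apply, ← mul_assoc, mul_one_div_cancel (NeZero.ne _), one_mul,
    symb, neg_sub, ← omegaRoot_pow_val_add, sub_add_cancel]
  simp only [_root_.zpow_neg, zpow_natCast, pow_mul]

lemma symb_one_eq_mul_Trec (m : ZMod d) :
    symb d c m 1 = d * Trec d c m 0 := by
  simpa using symb_sub_eq_mul_Trec d c m 0

end ShiftModulation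

theorem stmt15_general (d : ℕ) [NeZero d] (c : Matrix (ZMod d) (ZMod d) ℂ) :
    (∃ v : ZMod d → ℂ, Trec d c = Matrix.vecMulVec v (star v) ∧ v 0 ≠ 0) ↔
    ((symb d c 0 1).im = 0 ∧ 0 < (symb d c 0 1).re ∧
      ∀ j k : ZMod d,
        symb d c (j - k) (omegaRoot d ^ k.val)
          = symb d c j 1 * (starRingEnd ℂ) (symb d c k 1) / symb d c 0 1) := by
  have hd : (d : ℂ) ≠ 0 := NeZero.ne _
  simp only [symb_sub_eq_mul_Trec, symb_one_eq_mul_Trec]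
  rw [exists_eq_vecMulVec_star_iff (Trec d c) 0, RCLike.im_to_complex, RCLike.re_to_complex]
  refine and_congr (by simp [NeZero.ne d]) (and_congr (by simp [NeZero.pos d]) ?_)
  refine forall₂_congr fun j k => ?_
  rw [map_mul, map_natCast, mul_mul_mul_comm, mul_assoc, mul_div_mul_left _ _ hd,
    mul_div_assoc (d : ℂ), mul_right_inj' hd]

theorem stmt15 (d : ℕ) [NeZero d] (hd : 2 ≤ d) (c : Matrix (ZMod d) (ZMod d) ℂ) :
    (∃ v : ZMod d → ℂ, Trec d c = Matrix.vecMulVec v (star v) ∧ v 0 ≠ 0) ↔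
    ((symb d c 0 1).im = 0 ∧ 0 < (symb d c 0 1).re ∧
      ∀ j k : ZMod d,
        symb d c (j - k) (omegaRoot d ^ k.val)
          = symb d c j 1 * (starRingEnd ℂ) (symb d c k 1) / symb d c 0 1) :=
  stmt15_general d c
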